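/- Let n and m_1,…,m_n be positive integers with 1 ≤ m_i ≤ n for all i, and set m = m_1 + ⋯ + m_n. Let (P, ⊆) be the poset on subsets of {1,…,m} consisting of n pairwise incomparable disjoint paths A_1,…,A_n, where A_i = { {a_{i,1}}, {a_{i,1},a_{i,2}}, …, {a_{i,1},…,a_{i,m_i}} } for a partition of {1,…,m} into the elements a_{i,j}. If n > 2, or n = 2 and m_1 = m_2, then there exists a squarefree monomial ideal I ⊆ k[x_1,…,x_m] with full support whose support poset is (P, ⊆). Moreover, if m_i > 1 for all i, then there exists a zero-dimensional monomial ideal copolar to I. -/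
import Mathlib


/-- For a squarefree monomial ideal with minimal monomial generating set `G` (squarefree
monomials identified with their supports), the support set
`C p = ⋂ { supp s : s ∈ G, x_p ∣ s }`. -/
def suppC {m : ℕ} (G : Finset (Finset (Fin m))) (p : Fin m) : Finset (Fin m) :=
  Finset.univ.filter (fun q => ∀ s ∈ G, p ∈ s → q ∈ s)

/-- The polarization of the monomial `y^ν` (with `ν_j ≤ a_j`) with respect to `a`,
viewed as a squarefree monomial in the variables `y_{j,ℓ}`, identified with the set of
variables dividing it. -/
def polarSet {r : ℕ} (a : Fin r → ℕ) (ν : Fin r → ℕ) : Set (Σ j : Fin r, Fin (a j)) :=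
  {p | (p.2 : ℕ) < ν p.1}

namespace NPaths


def sfun {n m : ℕ} (mi : Fin n → ℕ) (e : (Σ i : Fin n, Fin (mi i)) ≃ Fin m)
    (f : Fin n → ℕ) : Finset (Fin m) :=
  Finset.univ.filter fun p => ((e.symm p).2 : ℕ) < f (e.symm p).1

lemma mem_sfun {n m : ℕ} {mi : Fin n → ℕ} {e : (Σ i : Fin n, Fin (mi i)) ≃ Fin m}
    {f : Fin n → ℕ} {p : Fin m} :
    p ∈ sfun mi e f ↔ ((e.symm p).2 : ℕ) < f (e.symm p).1 := by
  simp [sfun]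

lemma mem_sfun' {n m : ℕ} {mi : Fin n → ℕ} {e : (Σ i : Fin n, Fin (mi i)) ≃ Fin m}
    {f : Fin n → ℕ} {i : Fin n} {j : Fin (mi i)} :
    e ⟨i, j⟩ ∈ sfun mi e f ↔ (j : ℕ) < f i := by
  have h := e.symm_apply_apply ⟨i, j⟩
  rw [mem_sfun, h]

lemma fill {n : ℕ} (c : Fin n → ℕ) (K : ℕ) (hK : K ≤ ∑ i, c i) :
    ∃ f : Fin n → ℕ, (∀ i, f i ≤ c i) ∧ ∑ i, f i = K := by
  induction K with
  | zero => exact ⟨fun _ => 0, fun i => Nat.zero_le _, by simp⟩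
  | succ K ih =>
    obtain ⟨f, hf, hs⟩ := ih (by omega)
    have : ∃ i, f i < c i := by
      by_contra h
      push_neg at h
      have : ∑ i, c i ≤ ∑ i, f i := Finset.sum_le_sum fun i _ => h i
      omega
    obtain ⟨i, hi⟩ := this
    refine ⟨Function.update f i (f i + 1), fun i' => ?_, ?_⟩
    · rcases eq_or_ne i' i with rfl | h
      · simpa using hi
      · simpa [Function.update_of_ne h] using hf i'
    · rw [Finset.sum_update_of_mem (Finset.mem_univ i)]
      simp only [← Finset.erase_eq]
      rw [← Finset.add_sum_erase _ f (Finset.mem_univ i)] at hs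
      omega

lemma fill2 {n : ℕ} (c : Fin n → ℕ) (i : Fin n) (j D : ℕ) (hj : j ≤ c i)
    (hD : D ≤ ∑ i' ∈ Finset.univ.erase i, c i') :
    ∃ f : Fin n → ℕ, (∀ i', f i' ≤ c i') ∧ ∑ i', f i' = j + D ∧ f i = j := by
  obtain ⟨f, hf, hs⟩ := fill (Function.update c i 0) D (by
    rw [Finset.sum_update_of_mem (Finset.mem_univ i)]
    simp only [← Finset.erase_eq]
    omega)
  have hfi : f i = 0 := by have := hf i; simpa using this
  refine ⟨Function.update f i j, fun i' => ?_, ?_, by simp⟩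
  · rcases eq_or_ne i' i with rfl | h
    · simpa using hj
    · have := hf i'
      rw [Function.update_of_ne h] at this
      rw [Function.update_of_ne h]
      exact this
  · rw [Finset.sum_update_of_mem (Finset.mem_univ i)]
    simp only [← Finset.erase_eq]
    rw [← Finset.add_sum_erase _ f (Finset.mem_univ i)] at hs
    omega

lemma eq_of_le_of_sum_eq {n : ℕ} {f g : Fin n → ℕ} (h : ∀ i, f i ≤ g i)
    (hs : ∑ i, f i = ∑ i, g i) : f = g := by
  funext i
  by_contra hne
  have hlt : f i < g i := lt_of_le_of_ne (h i) hne
  have : ∑ i, f i < ∑ i, g i :=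
    Finset.sum_lt_sum (fun i _ => h i) ⟨i, Finset.mem_univ i, hlt⟩
  omega

lemma parts123 {n m : ℕ} (mi : Fin n → ℕ) (e : (Σ i : Fin n, Fin (mi i)) ≃ Fin m)
    (F : Finset (Fin n → ℕ))
    (Hle : ∀ f ∈ F, ∀ i, f i ≤ mi i)
    (Hanti : ∀ f ∈ F, ∀ g ∈ F, (∀ i, f i ≤ g i) → f = g)
    (HB : ∀ (i : Fin n) (j : ℕ), 1 ≤ j → j ≤ mi i → ∃ f ∈ F, f i = j)
    (HC : ∀ (i i' : Fin n), i ≠ i' → ∃ f ∈ F, f i = mi i ∧ f i' = 0) :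
    (∀ s ∈ F.image (sfun mi e), ∀ t ∈ F.image (sfun mi e), s ⊆ t → s = t) ∧
    (∀ p : Fin m, ∃ s ∈ F.image (sfun mi e), p ∈ s) ∧
    (∀ (i : Fin n) (j : Fin (mi i)),
      suppC (F.image (sfun mi e)) (e ⟨i, j⟩)
        = (Finset.univ.filter (fun j' : Fin (mi i) => (j' : ℕ) ≤ (j : ℕ))).image
            (fun j' => e ⟨i, j'⟩)) := by
  refine ⟨?_, ?_, ?_⟩
  · -- antichain
    intro s hs t ht hsub
    obtain ⟨f, hf, rfl⟩ := Finset.mem_image.mp hs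
    obtain ⟨g, hg, rfl⟩ := Finset.mem_image.mp ht
    have hle : ∀ i, f i ≤ g i := by
      intro i
      rcases Nat.eq_zero_or_pos (f i) with h0 | h0
      · omega
      · have hlt : f i - 1 < mi i := by have := Hle f hf i; omega
        have hmem : e ⟨i, ⟨f i - 1, hlt⟩⟩ ∈ sfun mi e f := by
          rw [mem_sfun']; simp; omega
        have := hsub hmem
        rw [mem_sfun'] at this
        simp at this
        omega
    rw [Hanti f hf g hg hle]
  · -- full support
    intro p
    obtain ⟨f, hf, hfi⟩ := HB (e.symm p).1 ((e.symm p).2 + 1) (by omega)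
      (by have := (e.symm p).2.isLt; omega)
    refine ⟨sfun mi e f, Finset.mem_image_of_mem _ hf, ?_⟩
    rw [mem_sfun, hfi]
    omega
  · -- supp poset
    intro i j
    ext q
    obtain ⟨⟨i'', j''⟩, rfl⟩ : ∃ x, e x = q := ⟨e.symm q, by simp⟩
    constructor
    · intro hq
      rw [suppC, Finset.mem_filter] at hq
      obtain ⟨-, hq⟩ := hq
      rcases eq_or_ne i i'' with heq | hne
      · -- same path : show j'' ≤ j
        subst heq
        obtain ⟨f, hf, hfi⟩ := HB i ((j : ℕ) + 1) (by omega) (by have := j.isLt; omega)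
        have := hq (sfun mi e f) (Finset.mem_image_of_mem _ hf)
          (mem_sfun'.mpr (by omega))
        rw [mem_sfun'] at this
        simp only [Finset.mem_image, Finset.mem_filter, Finset.mem_univ, true_and]
        exact ⟨j'', by omega, rfl⟩
      · -- different path : contradiction
        exfalso
        obtain ⟨f, hf, hfi, hfi''⟩ := HC i i'' hne
        have := hq (sfun mi e f) (Finset.mem_image_of_mem _ hf)
          (mem_sfun'.mpr (by have := j.isLt; omega))
        rw [mem_sfun'] at this
        omega
    · intro hq
      simp only [Finset.mem_image, Finset.mem_filter, Finset.mem_univ, true_and] at hq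
      obtain ⟨j', hj', hj'eq⟩ := hq
      have hsig : (⟨i, j'⟩ : Σ i : Fin n, Fin (mi i)) = ⟨i'', j''⟩ := e.injective hj'eq
      obtain ⟨rfl, hj2⟩ := Sigma.mk.inj_iff.mp hsig
      rw [heq_eq_eq] at hj2
      subst hj2
      rw [suppC, Finset.mem_filter]
      refine ⟨Finset.mem_univ _, ?_⟩
      intro t ht hmem
      obtain ⟨f, hf, rfl⟩ := Finset.mem_image.mp ht
      rw [mem_sfun'] at hmem ⊢
      omega



lemma polar_eq {n m : ℕ} (mi : Fin n → ℕ) (e : (Σ i : Fin n, Fin (mi i)) ≃ Fin m)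
    (a : Fin n → ℕ) (ha : ∀ i, a i = mi i) (f : Fin n → ℕ) :
    ((Equiv.sigmaCongrRight fun i => finCongr (ha i)).trans e) '' polarSet a f
      = ↑(sfun mi e f) := by
  ext x
  constructor
  · rintro ⟨⟨i, ℓ⟩, hℓ, rfl⟩
    have h1 : (Equiv.sigmaCongrRight fun i => finCongr (ha i)) ⟨i, ℓ⟩
        = ⟨i, finCongr (ha i) ℓ⟩ := rfl
    rw [Finset.mem_coe, Equiv.trans_apply, h1, mem_sfun']
    simpa [polarSet] using hℓ
  · intro hx
    rw [Finset.mem_coe, mem_sfun] at hx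
    refine ⟨⟨(e.symm x).1, (finCongr (ha _)).symm (e.symm x).2⟩, ?_, ?_⟩
    · simpa [polarSet] using hx
    · have h1 : (Equiv.sigmaCongrRight fun i => finCongr (ha i))
          ⟨(e.symm x).1, (finCongr (ha _)).symm (e.symm x).2⟩ = e.symm x := by
        simp
      rw [Equiv.trans_apply, h1, Equiv.apply_symm_apply]



def pureV {n : ℕ} (mi : Fin n → ℕ) (i : Fin n) : Fin n → ℕ :=
  fun i' => if i' = i then mi i else 0

def FA {n : ℕ} (mi : Fin n → ℕ) : Finset (Fin n → ℕ) :=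
  (Finset.univ.image (pureV mi)) ∪
    ((Fintype.piFinset fun i => Finset.range (mi i)).filter
      fun f => ∑ i, f i = Finset.univ.sup mi)

lemma pureV_self {n : ℕ} {mi : Fin n → ℕ} {i : Fin n} : pureV mi i i = mi i := if_pos rfl

lemma pureV_ne {n : ℕ} {mi : Fin n → ℕ} {i i' : Fin n} (h : i' ≠ i) :
    pureV mi i i' = 0 := if_neg h

lemma mem_FA {n : ℕ} {mi : Fin n → ℕ} {f : Fin n → ℕ} :
    f ∈ FA mi ↔ (∃ i, f = pureV mi i) ∨
      ((∀ i, f i < mi i) ∧ ∑ i, f i = Finset.univ.sup mi) := by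
  simp [FA, Fintype.mem_piFinset, eq_comm]

section A
variable {n : ℕ} {mi : Fin n → ℕ}

lemma sum_pureV (i : Fin n) : ∑ i', pureV mi i i' = mi i := by
  rw [← Finset.add_sum_erase _ _ (Finset.mem_univ i)]
  rw [Finset.sum_eq_zero (fun x hx => by
    simp [pureV, (Finset.mem_erase.mp hx).1])]
  simp [pureV]

lemma FA_le (hmi1 : ∀ i, 1 ≤ mi i) : ∀ f ∈ FA mi, ∀ i, f i ≤ mi i := by
  intro f hf i
  rcases mem_FA.mp hf with ⟨i', rfl⟩ | ⟨hlt, -⟩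
  · by_cases h : i = i' <;> simp [pureV, h]
  · exact le_of_lt (hlt i)

lemma FA_anti (hmi1 : ∀ i, 1 ≤ mi i) :
    ∀ f ∈ FA mi, ∀ g ∈ FA mi, (∀ i, f i ≤ g i) → f = g := by
  have hMle : ∀ i, mi i ≤ Finset.univ.sup mi := fun i => Finset.le_sup (Finset.mem_univ i)
  intro f hf g hg hle
  rcases mem_FA.mp hf with ⟨i, rfl⟩ | ⟨hflt, hfs⟩ <;>
    rcases mem_FA.mp hg with ⟨i', rfl⟩ | ⟨hglt, hgs⟩
  · -- pure ≤ pure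
    by_cases h : i = i'
    · subst h; rfl
    · exfalso
      have h2 := hle i
      rw [pureV_self, pureV_ne h] at h2
      have := hmi1 i; omega
  · -- pure ≤ capped : impossible
    have h2 := hle i
    rw [pureV_self] at h2
    have := hglt i
    omega
  · -- capped ≤ pure : impossible
    exfalso
    have hz : ∀ i'' , i'' ≠ i' → f i'' = 0 := by
      intro i'' h
      have := hle i''
      rw [pureV_ne h] at this
      omega
    have : ∑ i'', f i'' = f i' := by
      rw [← Finset.add_sum_erase _ _ (Finset.mem_univ i')]
      rw [Finset.sum_eq_zero (fun x hx => hz x (Finset.mem_erase.mp hx).1)]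
      omega
    have h1 := hflt i'
    have h2 := hMle i'
    omega
  · -- capped ≤ capped
    exact funext fun i => le_antisymm (hle i) (by
      by_contra h
      have hlt : f i < g i := by omega
      have : ∑ i, f i < ∑ i, g i :=
        Finset.sum_lt_sum (fun i _ => hle i) ⟨i, Finset.mem_univ i, hlt⟩
      omega)

lemma FA_HB (hmi1 : ∀ i, 1 ≤ mi i) (hmin : ∀ i, mi i ≤ n) (hA : ∀ i, 2 ≤ mi i) :
    ∀ (i : Fin n) (j : ℕ), 1 ≤ j → j ≤ mi i → ∃ f ∈ FA mi, f i = j := by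
  intro i j h1 h2
  rcases eq_or_lt_of_le h2 with heq | hlt
  · exact ⟨pureV mi i, mem_FA.mpr (Or.inl ⟨i, rfl⟩), by simp [pureV, heq]⟩
  · -- use fill2 with caps mi - 1
    set M := Finset.univ.sup mi with hM
    have hMle : ∀ i', mi i' ≤ M := fun i' => Finset.le_sup (Finset.mem_univ i')
    have hMn : M ≤ n := Finset.sup_le fun i' _ => hmin i'
    have hcard : (Finset.univ.erase i).card = n - 1 := by
      rw [Finset.card_erase_of_mem (Finset.mem_univ i), Finset.card_univ, Fintype.card_fin]
    have hsum1 : (n - 1) ≤ ∑ i' ∈ Finset.univ.erase i, (mi i' - 1) := by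
      calc n - 1 = (Finset.univ.erase i).card * 1 := by omega
      _ ≤ ∑ i' ∈ Finset.univ.erase i, (mi i' - 1) :=
        Finset.card_nsmul_le_sum _ _ _ (fun x _ => by have := hA x; show 1 ≤ mi x - 1; omega)
    have hD : M - j ≤ ∑ i' ∈ Finset.univ.erase i, (mi i' - 1) := by omega
    obtain ⟨f, hf, hfs, hfi⟩ := fill2 (fun i' => mi i' - 1) i j (M - j)
      (by simpa using (show j ≤ mi i - 1 by omega)) (by simpa using hD)
    have hf' : ∀ i', f i' ≤ mi i' - 1 := fun i' => hf i'
    refine ⟨f, mem_FA.mpr (Or.inr ⟨fun i' => by have := hf' i'; have := hA i'; omega, ?_⟩), hfi⟩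
    rw [hfs]
    have := hMle i
    omega

lemma FA_HC (hmi1 : ∀ i, 1 ≤ mi i) :
    ∀ (i i' : Fin n), i ≠ i' → ∃ f ∈ FA mi, f i = mi i ∧ f i' = 0 := by
  intro i i' h
  exact ⟨pureV mi i, mem_FA.mpr (Or.inl ⟨i, rfl⟩), by simp [pureV],
    by simp [pureV, Ne.symm h]⟩

lemma FA_sup (hmi1 : ∀ i, 1 ≤ mi i) (i : Fin n) :
    (FA mi).sup (fun ν => ν i) = mi i := by
  apply le_antisymm
  · exact Finset.sup_le fun f hf => FA_le hmi1 f hf i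
  · have : pureV mi i ∈ FA mi := mem_FA.mpr (Or.inl ⟨i, rfl⟩)
    have h2 := Finset.le_sup (f := fun ν => ν i) this
    simpa [pureV] using h2

end A


section FB1
variable {n : ℕ} (mi : Fin n → ℕ)

def FB1 : Finset (Fin n → ℕ) :=
  (Fintype.piFinset fun i => Finset.range (mi i + 1)).filter
    fun f => ∑ i, f i = Finset.univ.sup mi

variable {mi}

lemma mem_FB1 {f : Fin n → ℕ} :
    f ∈ FB1 mi ↔ (∀ i, f i ≤ mi i) ∧ ∑ i, f i = Finset.univ.sup mi := by
  simp [FB1, Fintype.mem_piFinset, Nat.lt_succ_iff]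

lemma FB1_anti : ∀ f ∈ FB1 mi, ∀ g ∈ FB1 mi, (∀ i, f i ≤ g i) → f = g := by
  intro f hf g hg hle
  exact eq_of_le_of_sum_eq hle (by rw [(mem_FB1.mp hf).2, (mem_FB1.mp hg).2])

lemma FB1_HB {m : ℕ} (hm : m = ∑ i, mi i) (h2M : 2 * Finset.univ.sup mi ≤ m) :
    ∀ (i : Fin n) (j : ℕ), 1 ≤ j → j ≤ mi i → ∃ f ∈ FB1 mi, f i = j := by
  intro i j h1 h2
  set M := Finset.univ.sup mi with hM
  have hMle : ∀ i', mi i' ≤ M := fun i' => Finset.le_sup (Finset.mem_univ i')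
  have h4 : mi i + ∑ i' ∈ Finset.univ.erase i, mi i' = m := by
    rw [hm, Finset.add_sum_erase _ mi (Finset.mem_univ i)]
  have hD : M - j ≤ ∑ i' ∈ Finset.univ.erase i, mi i' := by
    have := hMle i; omega
  obtain ⟨f, hf, hfs, hfi⟩ := fill2 mi i j (M - j) h2 hD
  refine ⟨f, mem_FB1.mpr ⟨hf, ?_⟩, hfi⟩
  rw [hfs]
  have := hMle i
  omega

lemma FB1_HC {m : ℕ} (hm : m = ∑ i, mi i) (h2M : 2 * Finset.univ.sup mi ≤ m) :
    ∀ (i i' : Fin n), i ≠ i' → ∃ f ∈ FB1 mi, f i = mi i ∧ f i' = 0 := by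
  intro i i' hne
  set M := Finset.univ.sup mi with hM
  have hMle : ∀ i'', mi i'' ≤ M := fun i'' => Finset.le_sup (Finset.mem_univ i'')
  set c := Function.update mi i' 0 with hc
  have hi' : i' ∈ Finset.univ.erase i := Finset.mem_erase.mpr ⟨Ne.symm hne, Finset.mem_univ _⟩
  have e1 : c i' + ∑ x ∈ (Finset.univ.erase i).erase i', c x
      = ∑ x ∈ Finset.univ.erase i, c x := Finset.add_sum_erase _ c hi'
  have e2 : c i' = 0 := Function.update_self _ _ _
  have e3 : ∑ x ∈ (Finset.univ.erase i).erase i', c x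
      = ∑ x ∈ (Finset.univ.erase i).erase i', mi x :=
    Finset.sum_congr rfl fun x hx =>
      Function.update_of_ne (Finset.mem_erase.mp hx).1 _ _
  have e4 : mi i' + ∑ x ∈ (Finset.univ.erase i).erase i', mi x
      = ∑ x ∈ Finset.univ.erase i, mi x := Finset.add_sum_erase _ mi hi'
  have e5 : mi i + ∑ x ∈ Finset.univ.erase i, mi x = m := by
    rw [hm, Finset.add_sum_erase _ mi (Finset.mem_univ i)]
  have hD : M - mi i ≤ ∑ x ∈ Finset.univ.erase i, c x := by
    have := hMle i; have := hMle i'; omega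
  have hj : mi i ≤ c i := by
    rw [hc, Function.update_of_ne hne]
  obtain ⟨f, hf, hfs, hfi⟩ := fill2 c i (mi i) (M - mi i) hj hD
  have hfle : ∀ x, f x ≤ mi x := by
    intro x
    rcases eq_or_ne x i' with rfl | hx
    · have := hf x; rw [e2] at this; omega
    · have := hf x; rwa [hc, Function.update_of_ne hx] at this
  have hfi' : f i' = 0 := by have := hf i'; rw [e2] at this; omega
  refine ⟨f, mem_FB1.mpr ⟨hfle, ?_⟩, hfi, hfi'⟩
  rw [hfs]
  have := hMle i
  omega

end FB1



section FB2
variable {n : ℕ} (b : Fin n)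

def dshift (i' : Fin n) : ℕ :=
  if (b : ℕ) ≤ (i' : ℕ) then (i' : ℕ) - (b : ℕ) else n - (b : ℕ) + (i' : ℕ)

def vBig : Fin n → ℕ := fun i => if i = b then n else 0

def vOnes : Fin n → ℕ := fun i => if i = b then 0 else 1

def vS (i' : Fin n) : Fin n → ℕ :=
  fun i => if i = b then dshift b i' else if i = i' then 1 else 0

def FB2 : Finset (Fin n → ℕ) :=
  insert (vBig b) (insert (vOnes b) ((Finset.univ.filter (· ≠ b)).image (vS b)))

variable {b}

lemma dshift_lt (i' : Fin n) : dshift b i' < n := by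
  have h1 := b.isLt
  have h2 := i'.isLt
  unfold dshift
  split <;> omega

lemma dshift_pos {i' : Fin n} (h : i' ≠ b) : 1 ≤ dshift b i' := by
  have h1 := b.isLt
  have h2 := i'.isLt
  have h3 : (i' : ℕ) ≠ (b : ℕ) := fun hh => h (Fin.ext hh)
  unfold dshift
  split <;> omega

lemma dshift_surj (j : ℕ) (h1 : 1 ≤ j) (h2 : j < n) :
    ∃ i' : Fin n, i' ≠ b ∧ dshift b i' = j := by
  have hb := b.isLt
  refine ⟨⟨if (b : ℕ) + j < n then (b : ℕ) + j else (b : ℕ) + j - n, by split <;> omega⟩,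
    ?_, ?_⟩
  · intro hh
    rw [Fin.ext_iff] at hh
    simp only [Fin.val_mk] at hh
    split_ifs at hh <;> omega
  · unfold dshift
    simp only [Fin.val_mk]
    split <;> split <;> omega

lemma mem_FB2 {f : Fin n → ℕ} :
    f ∈ FB2 b ↔ f = vBig b ∨ f = vOnes b ∨ ∃ i', i' ≠ b ∧ vS b i' = f := by
  simp [FB2]

lemma two_smalls (hn3 : 3 ≤ n) (b : Fin n) :
    ∃ c1 c2 : Fin n, c1 ≠ b ∧ c2 ≠ b ∧ c1 ≠ c2 := by
  have hb := b.isLt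
  refine ⟨⟨if (b : ℕ) = 0 then 1 else 0, by split <;> omega⟩,
    ⟨if (b : ℕ) = 2 then 1 else 2, by split <;> omega⟩, ?_, ?_, ?_⟩ <;>
    · intro hh
      rw [Fin.ext_iff] at hh
      simp only [Fin.val_mk] at hh
      split_ifs at hh <;> omega

variable {mi : Fin n → ℕ}

lemma FB2_le (hb : mi b = n) (hsmall : ∀ i, i ≠ b → mi i = 1) :
    ∀ f ∈ FB2 b, ∀ i, f i ≤ mi i := by
  intro f hf i
  rcases mem_FB2.mp hf with rfl | rfl | ⟨i', hi', rfl⟩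
  · rcases eq_or_ne i b with rfl | h
    · simp [vBig, hb]
    · simp [vBig, h]
  · rcases eq_or_ne i b with rfl | h
    · simp [vOnes]
    · simp [vOnes, h, hsmall i h]
  · rcases eq_or_ne i b with rfl | h
    · simp only [vS, if_pos rfl]
      rw [hb]
      exact le_of_lt (dshift_lt i')
    · simp only [vS, if_neg h]
      rw [hsmall i h]
      split <;> omega

lemma FB2_anti (hn3 : 3 ≤ n) :
    ∀ f ∈ FB2 b, ∀ g ∈ FB2 b, (∀ i, f i ≤ g i) → f = g := by
  obtain ⟨c1, c2, hc1, hc2, hcc⟩ := two_smalls hn3 b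
  intro f hf g hg hle
  rcases mem_FB2.mp hf with rfl | rfl | ⟨i1, hi1, rfl⟩ <;>
    rcases mem_FB2.mp hg with rfl | rfl | ⟨i2, hi2, rfl⟩
  · rfl
  · exfalso
    have h := hle b
    simp [vBig, vOnes] at h
    omega
  · exfalso
    have h := hle b
    simp [vBig, vS] at h
    have := dshift_lt (b := b) i2
    omega
  · exfalso
    have h := hle c1
    simp [vBig, vOnes, hc1] at h
  · rfl
  · exfalso
    by_cases hcase : i2 = c1
    · have h := hle c2
      simp [vOnes, vS, hc2, hcase, Ne.symm hcc] at h
    · have h := hle c1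
      simp [vOnes, vS, hc1, Ne.symm hcase] at h
  · exfalso
    have h := hle i1
    simp [vS, vBig, hi1] at h
  · exfalso
    have h := hle b
    simp [vS, vOnes] at h
    have := dshift_pos hi1
    omega
  · by_cases hcase : i1 = i2
    · subst hcase; rfl
    · exfalso
      have h := hle i1
      simp [vS, hi1, hcase] at h

lemma FB2_HB (hb : mi b = n) (hsmall : ∀ i, i ≠ b → mi i = 1) :
    ∀ (i : Fin n) (j : ℕ), 1 ≤ j → j ≤ mi i → ∃ f ∈ FB2 b, f i = j := by
  intro i j h1 h2
  rcases eq_or_ne i b with heq | h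
  · have h2' : j ≤ n := by rw [heq, hb] at h2; exact h2
    rcases eq_or_lt_of_le h2' with heq2 | hlt
    · exact ⟨vBig b, mem_FB2.mpr (Or.inl rfl), by simp [vBig, heq, heq2]⟩
    · obtain ⟨i', hi', hd⟩ := dshift_surj j h1 hlt
      exact ⟨vS b i', mem_FB2.mpr (Or.inr (Or.inr ⟨i', hi', rfl⟩)),
        by simp [vS, heq, hd]⟩
  · have h2' : j = 1 := by rw [hsmall i h] at h2; omega
    subst h2'
    exact ⟨vS b i, mem_FB2.mpr (Or.inr (Or.inr ⟨i, h, rfl⟩)),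
      by simp [vS, h]⟩

lemma FB2_HC (hb : mi b = n) (hsmall : ∀ i, i ≠ b → mi i = 1) :
    ∀ (i i' : Fin n), i ≠ i' → ∃ f ∈ FB2 b, f i = mi i ∧ f i' = 0 := by
  intro i i' hne
  rcases eq_or_ne i b with heq | h
  · refine ⟨vBig b, mem_FB2.mpr (Or.inl rfl), ?_, ?_⟩
    · simp [vBig, heq, hb]
    · have hib : i' ≠ b := by rw [← heq]; exact Ne.symm hne
      simp [vBig, hib]
  · rcases eq_or_ne i' b with heq' | h'
    · exact ⟨vOnes b, mem_FB2.mpr (Or.inr (Or.inl rfl)),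
        by simp [vOnes, h, hsmall i h], by simp [vOnes, heq']⟩
    · refine ⟨vS b i, mem_FB2.mpr (Or.inr (Or.inr ⟨i, h, rfl⟩)),
        by simp [vS, h, hsmall i h], ?_⟩
      simp [vS, h', Ne.symm hne]

end FB2

end NPaths

/-- Let `n` and `m_1,…,m_n` be positive integers with `m_i ≤ n` for
all `i`, and `m = m_1 + ⋯ + m_n`.  Let `(P, ⊆)` be the poset on subsets of `{1,…,m}`
consisting of `n` pairwise incomparable disjoint paths `A_1,…,A_n`, where
`A_i = { {a_{i,1}}, {a_{i,1},a_{i,2}}, …, {a_{i,1},…,a_{i,m_i}} }` for a partition of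
`{1,…,m}` into elements `a_{i,j}` (encoded by the bijection
`e : (Σ i, Fin (m_i)) ≃ Fin m`, `a_{i,j} = e ⟨i,j⟩`).  If `n > 2`, or `n = 2` and
`m_1 = m_2`, then there is a squarefree monomial ideal `I ⊆ k[x_1,…,x_m]` with full
support (given by its minimal generating set `G`, an antichain of supports) whose
support poset is `(P, ⊆)`, i.e. whose support set at the variable `a_{i,j}` is
`{a_{i,1},…,a_{i,j}}` for all `i, j`.  Moreover, if `m_i > 1` for all `i`, there is a
zero-dimensional monomial ideal copolar to `I`: a monomial ideal (given by its minimal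
generating set `H`, an antichain of exponent vectors) containing a power of each of its
variables (some minimal generator is a pure power of each variable), whose polarization
is equivalent to `I = I^P` via a bijection of variables. -/
theorem n_paths_support_poset (n : ℕ) (mi : Fin n → ℕ)
    (hmi1 : ∀ i, 1 ≤ mi i) (hmin : ∀ i, mi i ≤ n)
    (m : ℕ) (hm : m = ∑ i, mi i)
    (e : (Σ i : Fin n, Fin (mi i)) ≃ Fin m)
    (hn : 2 < n ∨ (n = 2 ∧ ∀ i j : Fin n, mi i = mi j)) :
    ∃ G : Finset (Finset (Fin m)),
      (∀ s ∈ G, ∀ t ∈ G, s ⊆ t → s = t) ∧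
      (∀ p : Fin m, ∃ s ∈ G, p ∈ s) ∧
      (∀ (i : Fin n) (j : Fin (mi i)),
        suppC G (e ⟨i, j⟩)
          = (Finset.univ.filter (fun j' : Fin (mi i) => (j' : ℕ) ≤ (j : ℕ))).image
              (fun j' => e ⟨i, j'⟩)) ∧
      ((∀ i, 1 < mi i) →
        ∃ (r : ℕ) (H : Finset (Fin r → ℕ)),
          (∀ μ ∈ H, ∀ ν ∈ H, (∀ j, μ j ≤ ν j) → μ = ν) ∧
          (∀ j : Fin r, ∃ ν ∈ H, (∀ j', j' ≠ j → ν j' = 0) ∧ 0 < ν j) ∧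
          ∃ φ : (Σ j : Fin r, Fin (H.sup (fun ν => ν j))) ≃ Fin m,
            (fun ν => φ '' polarSet (fun j => H.sup (fun ν => ν j)) ν) '' ↑H
              = (fun s : Finset (Fin m) => (↑s : Set (Fin m))) '' ↑G) := by
  classical
  have hn2 : 2 ≤ n := by rcases hn with h | ⟨h, -⟩ <;> omega
  by_cases hA : ∀ i, 2 ≤ mi i
  · -- all paths have length at least 2
    obtain ⟨h1, h2, h3⟩ := NPaths.parts123 mi e (NPaths.FA mi) (NPaths.FA_le hmi1)
      (NPaths.FA_anti hmi1) (NPaths.FA_HB hmi1 hmin hA) (NPaths.FA_HC hmi1)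
    refine ⟨(NPaths.FA mi).image (NPaths.sfun mi e), h1, h2, h3, ?_⟩
    intro _
    refine ⟨n, NPaths.FA mi, NPaths.FA_anti hmi1, ?_, ?_⟩
    · intro j
      exact ⟨NPaths.pureV mi j, NPaths.mem_FA.mpr (Or.inl ⟨j, rfl⟩),
        fun j' hj' => NPaths.pureV_ne hj', by rw [NPaths.pureV_self]; exact hmi1 j⟩
    · have ha : ∀ i, (NPaths.FA mi).sup (fun ν => ν i) = mi i := NPaths.FA_sup hmi1
      refine ⟨(Equiv.sigmaCongrRight fun i => finCongr (ha i)).trans e, ?_⟩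
      rw [Finset.coe_image, Set.image_image]
      apply Set.image_congr
      intro f _
      exact NPaths.polar_eq mi e _ ha f
  · -- some path has length 1 : the zero-dimensional part is vacuous
    push_neg at hA
    obtain ⟨i0, hi0⟩ := hA
    have hvac : ¬ (∀ i, 1 < mi i) := fun hall => absurd (hall i0) (by omega)
    by_cases h2M : 2 * Finset.univ.sup mi ≤ m
    · obtain ⟨h1, h2, h3⟩ := NPaths.parts123 mi e (NPaths.FB1 mi)
        (fun f hf i => (NPaths.mem_FB1.mp hf).1 i)
        NPaths.FB1_anti (NPaths.FB1_HB hm h2M) (NPaths.FB1_HC hm h2M)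
      exact ⟨_, h1, h2, h3, fun hall => absurd hall hvac⟩
    · -- the exceptional family : one path of length n, the rest of length 1
      set M := Finset.univ.sup mi with hMdef
      obtain ⟨b, -, hbM⟩ := Finset.exists_mem_eq_sup Finset.univ
        ⟨⟨0, by omega⟩, Finset.mem_univ _⟩ mi
      have hMle : ∀ i, mi i ≤ M := fun i => Finset.le_sup (Finset.mem_univ i)
      have hMn : M ≤ n := Finset.sup_le fun i _ => hmin i
      have hsum_b : mi b + ∑ i' ∈ Finset.univ.erase b, mi i' = m := by
        rw [hm, Finset.add_sum_erase _ mi (Finset.mem_univ b)]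
      have hcard : (Finset.univ.erase b).card = n - 1 := by
        rw [Finset.card_erase_of_mem (Finset.mem_univ b), Finset.card_univ,
          Fintype.card_fin]
      have hsum_ge : n - 1 ≤ ∑ i' ∈ Finset.univ.erase b, mi i' := by
        calc n - 1 = (Finset.univ.erase b).card * 1 := by omega
        _ ≤ ∑ i' ∈ Finset.univ.erase b, mi i' :=
          Finset.card_nsmul_le_sum _ _ _ (fun x _ => hmi1 x)
      have hn3 : 3 ≤ n := by
        rcases hn with h | ⟨h, hEq⟩
        · omega
        · exfalso
          apply h2M
          have hsum : ∑ i, mi i = n * mi b := by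
            rw [Finset.sum_congr rfl (fun i _ => hEq i b), Finset.sum_const,
              Finset.card_univ, Fintype.card_fin, smul_eq_mul]
          have hsum2 : m = 2 * mi b := by rw [hm, hsum, h]
          omega
      have hbn : mi b = n := by omega
      have hsmall : ∀ i, i ≠ b → mi i = 1 := by
        intro i hi
        by_contra hcon
        have h2 : 2 ≤ mi i := by have := hmi1 i; omega
        have hib : i ∈ Finset.univ.erase b :=
          Finset.mem_erase.mpr ⟨hi, Finset.mem_univ _⟩
        have e1 : mi i + ∑ x ∈ (Finset.univ.erase b).erase i, mi x
            = ∑ x ∈ Finset.univ.erase b, mi x := Finset.add_sum_erase _ mi hib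
        have hcard2 : ((Finset.univ.erase b).erase i).card = n - 2 := by
          rw [Finset.card_erase_of_mem hib]
          omega
        have e2 : n - 2 ≤ ∑ x ∈ (Finset.univ.erase b).erase i, mi x := by
          calc n - 2 = ((Finset.univ.erase b).erase i).card * 1 := by omega
          _ ≤ ∑ x ∈ (Finset.univ.erase b).erase i, mi x :=
            Finset.card_nsmul_le_sum _ _ _ (fun x _ => hmi1 x)
        omega
      obtain ⟨h1, h2, h3⟩ := NPaths.parts123 mi e (NPaths.FB2 b)
        (NPaths.FB2_le hbn hsmall) (NPaths.FB2_anti hn3)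
        (NPaths.FB2_HB hbn hsmall) (NPaths.FB2_HC hbn hsmall)
      exact ⟨_, h1, h2, h3, fun hall => absurd hall hvac⟩
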